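/- The substitution rule is derivable in λA: let Γ₁ ∪ Γ₂ be a well-formed typing context. If Γ₁ ∪ {x : A} ⊢ M : B and Γ₂ ⊢ N : A are derivable in the typing system λA, then Γ₁ ∪ Γ₂ ⊢ M[N/x] : B is also derivable in λA. -/
import Mathlib


namespace LambdaA

/-! ### Type expressions (de Bruijn representation for `μ`-binders) -/

inductive Ty : Type
  | var : ℕ → Ty
  | arrow : Ty → Ty → Ty
  | box : Ty → Ty
  | mu : Ty → Ty
  deriving DecidableEq

namespace Ty

def rename : (ℕ → ℕ) → Ty → Ty
  | f, var n => var (f n)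
  | f, arrow A B => arrow (rename f A) (rename f B)
  | f, box A => box (rename f A)
  | f, mu A => mu (rename (fun n => match n with | 0 => 0 | Nat.succ m => f m + 1) A)

def shiftUp : Ty → Ty := rename Nat.succ

def subst : (ℕ → Ty) → Ty → Ty
  | σ, var n => σ n
  | σ, arrow A B => arrow (subst σ A) (subst σ B)
  | σ, box A => box (subst σ A)
  | σ, mu A => mu (subst (fun n => match n with | 0 => var 0 | Nat.succ m => shiftUp (σ m)) A)

end Ty

/-- `openT A B`: instantiate the outermost bound variable (index `0`) of the body `A` by `B`. -/
def openT (A B : Ty) : Ty :=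
  Ty.subst (fun n => match n with | 0 => B | Nat.succ m => Ty.var m) A

/-- `substFree A X B` is the capture-avoiding substitution `A[B/X]` for the free variable `X`. -/
def substFree (A : Ty) (X : ℕ) (B : Ty) : Ty :=
  Ty.subst (fun n => if n = X then B else Ty.var n) A

/-- The unfolding `μX.A ↦ A[μX.A/X]` of a recursive type. -/
def unfoldMu (A : Ty) : Ty := openT A (Ty.mu A)

/-- Free occurrence of a type variable in a type expression. -/
def freeInTy : ℕ → Ty → Prop
  | X, .var n => n = X
  | X, .arrow A B => freeInTy X A ∨ freeInTy X B
  | X, .box A => freeInTy X A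
  | X, .mu A => freeInTy (X + 1) A

/-- Auxiliary ⊤-variant test.  `tvAux A d t` scans the tail of `A`, where `d` is the number of
`μ`-binders passed so far and `t` is the number of (outermost) such binders inside which a `•`
has already been encountered.  A variable qualifies iff it is bound by one of the `μ`-binders
and at least one `•` occurs inside that binder. -/
def tvAux : Ty → ℕ → ℕ → Bool
  | .var j, d, t => decide (d - t ≤ j ∧ j < d)
  | .box A, d, _ => tvAux A d d
  | .mu A, d, t => tvAux A (d + 1) t
  | .arrow _ B, d, t => tvAux B d t

/-- `A` is a ⊤-variant. -/
def IsTV (A : Ty) : Prop := tvAux A 0 0 = true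

/-- `Proper A X` : the type expression `A` is proper in the (free) variable `X`. -/
def Proper : Ty → ℕ → Prop
  | .var n, X => n ≠ X
  | .box _, _ => True
  | .arrow A B, X => (Proper A X ∧ Proper B X) ∨ IsTV B
  | .mu A, X => Proper A (X + 1) ∨ IsTV (.mu A)

/-- Well-formed type expressions: every recursive type `μX.A` has `A` proper in `X`. -/
def WF : Ty → Prop
  | .var _ => True
  | .arrow A B => WF A ∧ WF B
  | .box A => WF A
  | .mu A => WF A ∧ Proper A 0

/-- `⊤ = μX.•X`. -/
def tyTop : Ty := .mu (.box (.var 0))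

/-- `•ⁿ A`. -/
def boxN (n : ℕ) (A : Ty) : Ty := Ty.box^[n] A

/-- The equivalences `≅` (`s = false`) and `≃` (`s = true`) on type expressions. -/
inductive TyEq : Bool → Ty → Ty → Prop
  | refl (s : Bool) (A : Ty) : TyEq s A A
  | symm {s : Bool} {A B : Ty} : TyEq s A B → TyEq s B A
  | trans {s : Bool} {A B C : Ty} : TyEq s A B → TyEq s B C → TyEq s A C
  | boxCongr {s : Bool} {A B : Ty} : TyEq s A B → TyEq s (.box A) (.box B)
  | arrowCongr {s : Bool} {A B C D : Ty} :
      TyEq s A C → TyEq s B D → TyEq s (.arrow A B) (.arrow C D)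
  | arrowTop (s : Bool) (A : Ty) : TyEq s (.arrow A tyTop) tyTop
  | fix (s : Bool) (A : Ty) : TyEq s (.mu A) (unfoldMu A)
  | uniq {s : Bool} {A C : Ty} : TyEq s A (openT C A) → Proper C 0 → TyEq s A (.mu C)
  | kl (A B : Ty) : TyEq true (.box (.arrow A B)) (.arrow (.box A) (.box B))

/-! ### Subtyping -/

/-- Subtyping assumptions: finite sets of pairs of type variables. -/
abbrev Assum := Finset (ℕ × ℕ)

/-- Well-formedness of a subtyping assumption: every type variable occurs at most once. -/
def AssumOK (γ : Assum) : Prop :=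
  (∀ p ∈ γ, (p : ℕ × ℕ).1 ≠ p.2) ∧
    ∀ p ∈ γ, ∀ q ∈ γ, p ≠ q →
      (p : ℕ × ℕ).1 ≠ (q : ℕ × ℕ).1 ∧ p.1 ≠ q.2 ∧ p.2 ≠ q.1 ∧ p.2 ≠ q.2

/-- `X` occurs in the subtyping assumption `γ`. -/
def AssumVar (γ : Assum) (X : ℕ) : Prop :=
  ∃ p ∈ γ, (p : ℕ × ℕ).1 = X ∨ (p : ℕ × ℕ).2 = X

/-- Derivability of subtyping judgments `γ ⊢ A ⪯ B`. -/
inductive Sub : Assum → Ty → Ty → Prop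
  | assump {γ : Assum} {X Y : ℕ} : AssumOK γ → (X, Y) ∈ γ → Sub γ (.var X) (.var Y)
  | top {γ : Assum} (A : Ty) : AssumOK γ → Sub γ A tyTop
  | refl {γ : Assum} {A B : Ty} : AssumOK γ → TyEq true A B → Sub γ A B
  | trans {γ₁ γ₂ : Assum} {A B C : Ty} :
      Sub γ₁ A B → Sub γ₂ B C → AssumOK (γ₁ ∪ γ₂) → Sub (γ₁ ∪ γ₂) A C
  | boxMono {γ : Assum} {A B : Ty} : Sub γ A B → Sub γ (.box A) (.box B)
  | arrowMono {γ₁ γ₂ : Assum} {A A' B B' : Ty} :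
      Sub γ₁ A' A → Sub γ₂ B B' → AssumOK (γ₁ ∪ γ₂) →
      Sub (γ₁ ∪ γ₂) (.arrow A B) (.arrow A' B')
  | muMono {γ : Assum} {X Y : ℕ} {A B : Ty} :
      AssumOK (insert (X, Y) γ) →
      Sub (insert (X, Y) γ) (openT A (.var X)) (openT B (.var Y)) →
      ¬ AssumVar γ X → ¬ AssumVar γ Y →
      ¬ freeInTy X (openT B (.var Y)) → ¬ freeInTy Y (openT A (.var X)) →
      Proper (openT A (.var X)) X → Proper (openT B (.var Y)) Y →
      Sub γ (.mu A) (.mu B)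
  | approx {γ : Assum} (A : Ty) : AssumOK γ → Sub γ A (.box A)

/-! ### Untyped λ-terms (locally-nameless representation) -/

inductive Tm : Type
  | bvar : ℕ → Tm
  | fvar : ℕ → Tm
  | lam : Tm → Tm
  | app : Tm → Tm → Tm
  deriving DecidableEq

def openTmAux (N : Tm) : ℕ → Tm → Tm
  | _, .fvar y => .fvar y
  | k, .bvar i => if i = k then N else .bvar i
  | k, .lam M => .lam (openTmAux N (k + 1) M)
  | k, .app M₁ M₂ => .app (openTmAux N k M₁) (openTmAux N k M₂)

/-- Instantiate the outermost bound variable of the body `M` by `N`. -/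
def openTm (M N : Tm) : Tm := openTmAux N 0 M

/-- `substTm M x N` is the substitution `M[N/x]` for the free variable `x`. -/
def substTm : Tm → ℕ → Tm → Tm
  | .bvar i, _, _ => .bvar i
  | .fvar y, x, N => if y = x then N else .fvar y
  | .lam M, x, N => .lam (substTm M x N)
  | .app M₁ M₂, x, N => .app (substTm M₁ x N) (substTm M₂ x N)

/-- Free occurrence of an individual variable in a λ-term. -/
def freeTm : ℕ → Tm → Prop
  | _, .bvar _ => False
  | x, .fvar y => y = x
  | x, .lam M => freeTm x M
  | x, .app M₁ M₂ => freeTm x M₁ ∨ freeTm x M₂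

/-- One-step β-reduction. -/
inductive Step : Tm → Tm → Prop
  | beta (M N : Tm) : Step (.app (.lam M) N) (openTm M N)
  | appL {M M' : Tm} (N : Tm) : Step M M' → Step (.app M N) (.app M' N)
  | appR (M : Tm) {N N' : Tm} : Step N N' → Step (.app M N) (.app M N')
  | lamCongr {M M' : Tm} : Step M M' → Step (.lam M) (.lam M')

/-- `→*β`, the reflexive-transitive closure of β-reduction. -/
def Steps : Tm → Tm → Prop := Relation.ReflTransGen Step

/-- β-convertibility `=β`. -/
inductive BetaEq : Tm → Tm → Prop
  | step {M N : Tm} : Step M N → BetaEq M N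
  | refl (M : Tm) : BetaEq M M
  | symm {M N : Tm} : BetaEq M N → BetaEq N M
  | trans {M N K : Tm} : BetaEq M N → BetaEq N K → BetaEq M K

/-! ### Typing -/

/-- Typing contexts: finite sets of (variable, type) pairs. -/
abbrev Ctx := Finset (ℕ × Ty)

/-- Well-formedness of a typing context (functionality). -/
def CtxOK (Γ : Ctx) : Prop :=
  ∀ p ∈ Γ, ∀ q ∈ Γ, (p : ℕ × Ty).1 = (q : ℕ × Ty).1 → p = q

/-- `•Γ`. -/
def boxCtx (Γ : Ctx) : Ctx := Γ.image fun p => (p.1, Ty.box p.2)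

/-- All types in the context are well-formed type expressions. -/
def CtxWF (Γ : Ctx) : Prop := ∀ p ∈ Γ, WF (p : ℕ × Ty).2

/-- The typing system λA. -/
inductive Typing : Ctx → Tm → Ty → Prop
  | var {Γ : Ctx} {x : ℕ} {A : Ty} : CtxOK Γ → (x, A) ∈ Γ → Typing Γ (.fvar x) A
  | shift {Γ : Ctx} {M : Tm} {A : Ty} : Typing (boxCtx Γ) M (.box A) → Typing Γ M A
  | top {Γ : Ctx} (M : Tm) : CtxOK Γ → Typing Γ M tyTop
  | sub {Γ : Ctx} {M : Tm} {A B : Ty} : Typing Γ M A → Sub ∅ A B → Typing Γ M B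
  | lamI {Γ : Ctx} {x : ℕ} {A B : Ty} {M : Tm} :
      ¬ freeTm x M →
      Typing (insert (x, A) Γ) (openTm M (.fvar x)) B →
      Typing Γ (.lam M) (.arrow A B)
  | appE {Γ₁ Γ₂ : Ctx} {M N : Tm} {A B : Ty} :
      Typing Γ₁ M (.arrow A B) → Typing Γ₂ N A → CtxOK (Γ₁ ∪ Γ₂) →
      Typing (Γ₁ ∪ Γ₂) (.app M N) B

/-! ### Frames, λ-algebras and the semantics of types -/

/-- The accessibility relation is conversely well-founded. -/
def ConverselyWF {W : Type*} (acc : W → W → Prop) : Prop :=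
  WellFounded fun q p => acc p q

/-- Local linearity of the accessibility relation. -/
def LocallyLinear {W : Type*} (acc : W → W → Prop) : Prop :=
  ∀ p q, acc p q → ∃ r, Relation.ReflTransGen acc p r ∧ acc r q ∧
    ∀ s, acc r s → Relation.ReflTransGen acc q s

/-- Hereditary type environments. -/
def Hereditary {W : Type*} {V : Type*} (acc : W → W → Prop) (η : ℕ → W → Set V) : Prop :=
  ∀ X p q, acc p q → η X p ⊆ η X q

/-- Syntactical λ-algebras of the untyped λ-calculus. -/
structure LambdaAlgebra (V : Type*) where
  nonempty : Nonempty V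
  ap : V → V → V
  den : Tm → (ℕ → V) → V
  den_fvar : ∀ x ρ, den (.fvar x) ρ = ρ x
  den_app : ∀ M N ρ, den (.app M N) ρ = ap (den M ρ) (den N ρ)
  den_lam : ∀ M x ρ v, ¬ freeTm x M →
    ap (den (.lam M) ρ) v = den (openTm M (.fvar x)) (Function.update ρ x v)
  den_ext : ∀ M ρ ρ', (∀ x, freeTm x M → ρ x = ρ' x) → den M ρ = den M ρ'
  den_beta : ∀ M N ρ, BetaEq M N → den M ρ = den N ρ

/-- The interpretation `I(A)^η_p` of type expressions over a frame, packaged together with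
its defining (recursion) equations. -/
structure Interp (W : Type*) (acc : W → W → Prop) (V : Type*) (ap : V → V → V) where
  I : Ty → (ℕ → W → Set V) → W → Set V
  I_tv : ∀ A η p, WF A → IsTV A → I A η p = Set.univ
  I_var : ∀ X η p, I (.var X) η p = η X p
  I_box : ∀ A η p, WF A → ¬ IsTV (Ty.box A) →
    I (.box A) η p = {u | ∀ q, acc p q → u ∈ I A η q}
  I_arrow : ∀ A B η p, WF A → WF B → ¬ IsTV (Ty.arrow A B) →
    I (.arrow A B) η p =
      {u | ∀ q, Relation.ReflTransGen acc p q → ∀ v ∈ I A η q, ap u v ∈ I B η q}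
  I_mu : ∀ A η p, WF (Ty.mu A) → ¬ IsTV (Ty.mu A) →
    I (.mu A) η p = I (unfoldMu A) η p

/-! ### Tail finiteness and related notions -/

/-- The sets `TF^V`. -/
inductive TFmem : Set ℕ → Ty → Prop
  | var {V : Set ℕ} {X : ℕ} : X ∉ V → TFmem V (.var X)
  | box {V : Set ℕ} {A : Ty} : TFmem V A → TFmem V (.box A)
  | arrow {V : Set ℕ} (A : Ty) {B : Ty} : TFmem V B → TFmem V (.arrow A B)
  | mu {V : Set ℕ} {A : Ty} : WF (.mu A) → TFmem ({0} ∪ (Nat.succ '' V)) A → TFmem V (.mu A)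

/-- Shapes `•^{m₀}(B₁ → •^{m₁}(B₂ → ⋯ → •^{m_{n-1}}(Bₙ → •^{mₙ} X)⋯))`. -/
inductive TFShape : Ty → Prop
  | var (X : ℕ) : TFShape (.var X)
  | box {A : Ty} : TFShape A → TFShape (.box A)
  | arrow (A : Ty) {B : Ty} : TFShape B → TFShape (.arrow A B)

/-- Tail finite type expressions. -/
def TailFinite (A : Ty) : Prop := ∃ C, TFShape C ∧ WF C ∧ TyEq false A C

-- Effectively occurring type variables, positively (`petv`) and negatively (`netv`).
mutual
  def petv : Ty → Finset ℕ
    | .var X => {X}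
    | .box A => if tvAux (.box A) 0 0 then ∅ else petv A
    | .arrow A B => if tvAux (.arrow A B) 0 0 then ∅ else netv A ∪ petv B
    | .mu A =>
        if tvAux (.mu A) 0 0 then ∅
        else if 0 ∈ netv A then ((petv A ∪ netv A).erase 0).image (· - 1)
        else ((petv A).erase 0).image (· - 1)
  def netv : Ty → Finset ℕ
    | .var _ => ∅
    | .box A => if tvAux (.box A) 0 0 then ∅ else netv A
    | .arrow A B => if tvAux (.arrow A B) 0 0 then ∅ else petv A ∪ netv B
    | .mu A =>
        if tvAux (.mu A) 0 0 then ∅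
        else if 0 ∈ netv A then ((netv A ∪ petv A).erase 0).image (· - 1)
        else ((netv A).erase 0).image (· - 1)
end

/-- Positively finite type expressions. -/
def PosFin (A : Ty) : Prop :=
  ∀ (s : Bool) (B C : Ty) (X : ℕ), WF B → WF C →
    TyEq s A (substFree B X C) → X ∈ petv B → X ∉ netv B → TailFinite C

/-- Negatively finite type expressions. -/
def NegFin (A : Ty) : Prop :=
  ∀ (s : Bool) (B C : Ty) (X : ℕ), WF B → WF C →
    TyEq s A (substFree B X C) → X ∈ netv B → X ∉ petv B → TailFinite C

/-! ### Head normal forms, maximality, normal forms -/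

/-- `y N₁ … Nₙ` with every argument satisfying `P`. -/
inductive SpineArgs (P : Tm → Prop) : Tm → Prop
  | fvar (x : ℕ) : SpineArgs P (.fvar x)
  | bvar (i : ℕ) : SpineArgs P (.bvar i)
  | app {M N : Tm} : SpineArgs P M → P N → SpineArgs P (.app M N)

/-- Head normal forms `λx₁…λxₘ. y N₁ … Nₙ` whose arguments satisfy `P`. -/
inductive HNFP (P : Tm → Prop) : Tm → Prop
  | spine {M : Tm} : SpineArgs P M → HNFP P M
  | lam {M : Tm} : HNFP P M → HNFP P (.lam M)

/-- Head normal forms. -/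
def HNF : Tm → Prop := HNFP fun _ => True

/-- Maximality at a given depth. -/
def MaxAt : ℕ → Tm → Prop
  | 0, _ => True
  | n + 1, M => ∃ M', Steps M M' ∧ HNFP (MaxAt n) M'

/-- Maximal λ-terms: the Böhm tree contains no `⊥`. -/
def Maximal (M : Tm) : Prop := ∀ n, MaxAt n M

/-- β-normal forms. -/
def NormalForm (M : Tm) : Prop := ∀ N, ¬ Step M N

/-- Type expressions without any occurrence of the modal operator `•`. -/
def NoBox : Ty → Prop
  | .var _ => True
  | .arrow A B => NoBox A ∧ NoBox B
  | .box _ => False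
  | .mu A => NoBox A

/-! ### The modal logic LAμ and its Kripke semantics -/

/-- The logic LAμ (formulae are type expressions). -/
inductive LAmu : Finset Ty → Ty → Prop
  | assump {Γ : Finset Ty} {A : Ty} : LAmu (insert A Γ) A
  | nec {Γ₁ : Finset Ty} (Γ₂ : Finset Ty) {A : Ty} :
      LAmu Γ₁ A → LAmu (Γ₁.image Ty.box ∪ Γ₂) (.box A)
  | four {Γ : Finset Ty} {A : Ty} : LAmu Γ (.box A) → LAmu Γ (.box (.box A))
  | impI {Γ : Finset Ty} {A B : Ty} : LAmu (insert A Γ) B → LAmu Γ (.arrow A B)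
  | impE {Γ₁ Γ₂ : Finset Ty} {A B : Ty} :
      LAmu Γ₁ (.arrow A B) → LAmu Γ₂ A → LAmu (Γ₁ ∪ Γ₂) B
  | fold {Γ : Finset Ty} {A : Ty} : LAmu Γ (unfoldMu A) → LAmu Γ (.mu A)
  | unfold {Γ : Finset Ty} {A : Ty} : LAmu Γ (.mu A) → LAmu Γ (unfoldMu A)
  | lrule {Γ : Finset Ty} {A B : Ty} :
      LAmu Γ (.arrow (.box A) (.box B)) → LAmu Γ (.box (.arrow A B))
  | approx {Γ : Finset Ty} {A : Ty} : LAmu Γ A → LAmu Γ (.box A)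

/-- The Kripke satisfaction relation over an LA-frame `(W, tri, R)` under a valuation `ξ`,
packaged with its defining (recursion) equations. -/
structure SatFun {W : Type*} (tri R : W → W → Prop) (ξ : ℕ → W → Prop) where
  sat : Ty → W → Prop
  sat_tv : ∀ A p, WF A → IsTV A → sat A p
  sat_var : ∀ X p, sat (.var X) p ↔ ξ X p
  sat_box : ∀ A p, WF A → ¬ IsTV (Ty.box A) →
    (sat (.box A) p ↔ ∀ q, tri p q → sat A q)
  sat_arrow : ∀ A B p, WF A → WF B → ¬ IsTV (Ty.arrow A B) →
    (sat (.arrow A B) p ↔ ∀ q, R p q → sat A q → sat B q)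
  sat_mu : ∀ A p, WF (Ty.mu A) → ¬ IsTV (Ty.mu A) →
    (sat (.mu A) p ↔ sat (unfoldMu A) p)

/-! ### Auxiliary development for the substitution lemma -/

section SubstitutionLemma

lemma assumOK_empty : AssumOK (∅ : Assum) :=
  ⟨fun p hp => absurd hp (Finset.notMem_empty p),
   fun p hp => absurd hp (Finset.notMem_empty p)⟩

/-- Free variables of a term, as a `Finset`. -/
def fvTm : Tm → Finset ℕ
  | .bvar _ => ∅
  | .fvar y => {y}
  | .lam M => fvTm M
  | .app M N => fvTm M ∪ fvTm N

/-- Renaming of free individual variables. -/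
def renameTm (π : ℕ → ℕ) : Tm → Tm
  | .bvar i => .bvar i
  | .fvar y => .fvar (π y)
  | .lam M => .lam (renameTm π M)
  | .app M N => .app (renameTm π M) (renameTm π N)

/-- Renaming of the variables of a context. -/
def mapCtx (π : ℕ → ℕ) (Γ : Ctx) : Ctx := Γ.image fun p => (π p.1, p.2)

/-- Domain of a context. -/
def domC (Γ : Ctx) : Finset ℕ := Γ.image Prod.fst

lemma mem_domC {Γ : Ctx} {a : ℕ} : a ∈ domC Γ ↔ ∃ p ∈ Γ, (p : ℕ × Ty).1 = a := by
  simp [domC]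

lemma freeTm_iff {x : ℕ} : ∀ {M : Tm}, freeTm x M ↔ x ∈ fvTm M := by
  intro M
  induction M with
  | bvar i => simp [freeTm, fvTm]
  | fvar y => simp [freeTm, fvTm, eq_comm]
  | lam M ih => simpa [freeTm, fvTm] using ih
  | app M N ihM ihN => simp [freeTm, fvTm, ihM, ihN]

lemma renameTm_openAux (π : ℕ → ℕ) (u : Tm) : ∀ (M : Tm) (k : ℕ),
    renameTm π (openTmAux u k M) = openTmAux (renameTm π u) k (renameTm π M) := by
  intro M
  induction M with
  | bvar i => intro k; by_cases h : i = k <;> simp [openTmAux, renameTm, h]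
  | fvar y => intro k; simp [openTmAux, renameTm]
  | lam M ih => intro k; simp [openTmAux, renameTm, ih]
  | app M N ihM ihN => intro k; simp [openTmAux, renameTm, ihM, ihN]

lemma renameTm_fix {π : ℕ → ℕ} : ∀ {M : Tm}, (∀ w, freeTm w M → π w = w) →
    renameTm π M = M := by
  intro M
  induction M with
  | bvar i => intro _; rfl
  | fvar y => intro h; simp [renameTm, h y (by simp [freeTm])]
  | lam M ih => intro h; simp [renameTm]; exact ih fun w hw => h w hw
  | app M N ihM ihN =>
      intro h
      simp [renameTm]
      exact ⟨ihM fun w hw => h w (Or.inl hw), ihN fun w hw => h w (Or.inr hw)⟩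

lemma freeTm_renameTm {π : ℕ → ℕ} (hπ : Function.Injective π) {y : ℕ} :
    ∀ {M : Tm}, freeTm (π y) (renameTm π M) → freeTm y M := by
  intro M
  induction M with
  | bvar i => intro h; exact h
  | fvar w => intro h; exact hπ h
  | lam M ih => intro h; exact ih h
  | app M N ihM ihN => intro h; rcases h with h | h
                       · exact Or.inl (ihM h)
                       · exact Or.inr (ihN h)

lemma not_freeTm_openAux {z : ℕ} {u : Tm} (hu : ¬ freeTm z u) :
    ∀ {M : Tm} (k : ℕ), ¬ freeTm z M → ¬ freeTm z (openTmAux u k M) := by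
  intro M
  induction M with
  | bvar i =>
      intro k _ h
      by_cases hik : i = k
      · rw [hik] at h; simp [openTmAux] at h; exact hu h
      · simp [openTmAux, hik] at h; exact h
  | fvar y => intro k h h'; exact h h'
  | lam M ih => intro k h h'; exact ih (k + 1) h h'
  | app M N ihM ihN =>
      intro k h h'
      rcases h' with h' | h'
      · exact ihM k (fun hh => h (Or.inl hh)) h'
      · exact ihN k (fun hh => h (Or.inr hh)) h'

lemma not_freeTm_substTm {z x : ℕ} {N : Tm} (hN : ¬ freeTm z N) :
    ∀ {M : Tm}, ¬ freeTm z M → ¬ freeTm z (substTm M x N) := by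
  intro M
  induction M with
  | bvar i => intro h; exact h
  | fvar y =>
      intro h
      by_cases hyx : y = x
      · simpa [substTm, hyx] using hN
      · simpa [substTm, hyx] using h
  | lam M ih => intro h; exact ih h
  | app M N' ihM ihN =>
      intro h h'
      rcases h' with h' | h'
      · exact ihM (fun hh => h (Or.inl hh)) h'
      · exact ihN (fun hh => h (Or.inr hh)) h'

lemma subst_open_eq {z x : ℕ} (hzx : z ≠ x) (N : Tm) : ∀ (M : Tm) (k : ℕ),
    openTmAux (Tm.fvar z) k (substTm (openTmAux (Tm.fvar z) k M) x N)
      = openTmAux (Tm.fvar z) k (substTm M x N) := by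
  intro M
  induction M with
  | bvar i =>
      intro k
      by_cases hik : i = k
      · simp [openTmAux, substTm, hik, hzx]
      · simp [openTmAux, substTm, hik]
  | fvar y =>
      intro k
      by_cases hyx : y = x
      · simp [openTmAux, substTm, hyx]
      · simp [openTmAux, substTm, hyx]
  | lam M ih => intro k; simp [openTmAux, substTm, ih]
  | app M N' ihM ihN => intro k; simp [openTmAux, substTm, ihM, ihN]

lemma open_open_eq {z : ℕ} (u : Tm) : ∀ (M : Tm) {i j : ℕ}, i ≠ j →
    openTmAux (Tm.fvar z) i (openTmAux u j (openTmAux (Tm.fvar z) i M))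
      = openTmAux (Tm.fvar z) i (openTmAux u j M) := by
  intro M
  induction M with
  | bvar m =>
      intro i j hij
      rcases eq_or_ne m i with rfl | hmi
      · simp [openTmAux, hij]
      · rcases eq_or_ne m j with rfl | hmj
        · simp [openTmAux, hmi]
        · simp [openTmAux, hmi, hmj]
  | fvar y => intro i j hij; simp [openTmAux]
  | lam M ih =>
      intro i j hij
      simp only [openTmAux]
      rw [ih (by omega : i + 1 ≠ j + 1)]
  | app M N ihM ihN =>
      intro i j hij
      simp only [openTmAux]
      rw [ihM hij, ihN hij]

/-! ### Context lemmas -/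

lemma ctxOK_mono {Γ Γ' : Ctx} (hsub : Γ ⊆ Γ') (h : CtxOK Γ') : CtxOK Γ :=
  fun p hp q hq hpq => h p (hsub hp) q (hsub hq) hpq

lemma ctxOK_boxCtx {Γ : Ctx} (h : CtxOK Γ) : CtxOK (boxCtx Γ) := by
  intro p hp q hq hpq
  simp only [boxCtx, Finset.mem_image] at hp hq
  obtain ⟨p', hp', rfl⟩ := hp
  obtain ⟨q', hq', rfl⟩ := hq
  simp only at hpq
  have := h p' hp' q' hq' hpq
  rw [this]

lemma ctxOK_of_boxCtx {Γ : Ctx} (h : CtxOK (boxCtx Γ)) : CtxOK Γ := by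
  intro p hp q hq hpq
  have hp' : (p.1, Ty.box p.2) ∈ boxCtx Γ := Finset.mem_image_of_mem _ hp
  have hq' : (q.1, Ty.box q.2) ∈ boxCtx Γ := Finset.mem_image_of_mem _ hq
  have := h _ hp' _ hq' hpq
  have h2 : Ty.box p.2 = Ty.box q.2 := congrArg Prod.snd this
  have h1 : p.1 = q.1 := hpq
  cases p; cases q
  simp only [Ty.box.injEq] at h2
  simp_all

lemma boxCtx_insert (p : ℕ × Ty) (Γ : Ctx) :
    boxCtx (insert p Γ) = insert (p.1, Ty.box p.2) (boxCtx Γ) := by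
  simp [boxCtx, Finset.image_insert]

lemma boxCtx_union (Γ Δ : Ctx) : boxCtx (Γ ∪ Δ) = boxCtx Γ ∪ boxCtx Δ := by
  simp [boxCtx, Finset.image_union]

lemma mapCtx_insert (π : ℕ → ℕ) (p : ℕ × Ty) (Γ : Ctx) :
    mapCtx π (insert p Γ) = insert (π p.1, p.2) (mapCtx π Γ) := by
  simp [mapCtx, Finset.image_insert]

lemma mapCtx_union (π : ℕ → ℕ) (Γ Δ : Ctx) :
    mapCtx π (Γ ∪ Δ) = mapCtx π Γ ∪ mapCtx π Δ := by
  simp [mapCtx, Finset.image_union]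

lemma mapCtx_mapCtx {π : ℕ → ℕ} (hπ : ∀ w, π (π w) = w) (Γ : Ctx) :
    mapCtx π (mapCtx π Γ) = Γ := by
  rw [mapCtx, mapCtx, Finset.image_image]
  have : ((fun p : ℕ × Ty => (π p.1, p.2)) ∘ fun p : ℕ × Ty => (π p.1, p.2)) = id := by
    funext p; simp [Function.comp, hπ]
  rw [this, Finset.image_id]

lemma ctxOK_mapCtx {π : ℕ → ℕ} (hπ : Function.Injective π) {Γ : Ctx} (h : CtxOK Γ) :
    CtxOK (mapCtx π Γ) := by
  intro p hp q hq hpq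
  simp only [mapCtx, Finset.mem_image] at hp hq
  obtain ⟨p', hp', rfl⟩ := hp
  obtain ⟨q', hq', rfl⟩ := hq
  simp only at hpq
  have := h p' hp' q' hq' (hπ hpq)
  rw [this]

lemma boxCtx_mapCtx (π : ℕ → ℕ) (Γ : Ctx) :
    boxCtx (mapCtx π Γ) = mapCtx π (boxCtx Γ) := by
  simp [boxCtx, mapCtx, Finset.image_image]
  rfl

lemma ctxOK_insert_fresh {z : ℕ} {C : Ty} {Γ : Ctx} (hz : z ∉ domC Γ) (h : CtxOK Γ) :
    CtxOK (insert (z, C) Γ) := by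
  intro p hp q hq hpq
  rcases Finset.mem_insert.1 hp with rfl | hp
  · rcases Finset.mem_insert.1 hq with rfl | hq
    · rfl
    · exact absurd (mem_domC.2 ⟨q, hq, hpq.symm⟩) hz
  · rcases Finset.mem_insert.1 hq with rfl | hq
    · exact absurd (mem_domC.2 ⟨p, hp, hpq⟩) hz
    · exact h p hp q hq hpq

lemma domC_mono {Γ Γ' : Ctx} (h : Γ ⊆ Γ') : domC Γ ⊆ domC Γ' :=
  Finset.image_subset_image h

lemma domC_insert (p : ℕ × Ty) (Γ : Ctx) : domC (insert p Γ) = insert p.1 (domC Γ) := by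
  simp [domC, Finset.image_insert]

lemma domC_union (Γ Δ : Ctx) : domC (Γ ∪ Δ) = domC Γ ∪ domC Δ := by
  simp [domC, Finset.image_union]

lemma insert_erase_eq (p : ℕ × Ty) (Γ : Ctx) :
    insert p (Γ.erase p) = insert p Γ := by
  ext q
  simp only [Finset.mem_insert, Finset.mem_erase]
  constructor
  · rintro (rfl | ⟨_, hq⟩)
    · exact Or.inl rfl
    · exact Or.inr hq
  · rintro (rfl | hq)
    · exact Or.inl rfl
    · by_cases hqp : q = p
      · exact Or.inl hqp
      · exact Or.inr ⟨hqp, hq⟩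

/-! ### Height-indexed typing -/

inductive TypingN : ℕ → Ctx → Tm → Ty → Prop
  | var {n : ℕ} {Γ : Ctx} {x : ℕ} {A : Ty} : CtxOK Γ → (x, A) ∈ Γ →
      TypingN n Γ (.fvar x) A
  | shift {n : ℕ} {Γ : Ctx} {M : Tm} {A : Ty} :
      TypingN n (boxCtx Γ) M (.box A) → TypingN (n + 1) Γ M A
  | top {n : ℕ} {Γ : Ctx} (M : Tm) : CtxOK Γ → TypingN n Γ M tyTop
  | sub {n : ℕ} {Γ : Ctx} {M : Tm} {A B : Ty} :
      TypingN n Γ M A → Sub ∅ A B → TypingN (n + 1) Γ M B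
  | lamI {n : ℕ} {Γ : Ctx} {x : ℕ} {A B : Ty} {M : Tm} :
      ¬ freeTm x M →
      TypingN n (insert (x, A) Γ) (openTm M (.fvar x)) B →
      TypingN (n + 1) Γ (.lam M) (.arrow A B)
  | appE {n : ℕ} {Γ₁ Γ₂ : Ctx} {M N : Tm} {A B : Ty} :
      TypingN n Γ₁ M (.arrow A B) → TypingN n Γ₂ N A → CtxOK (Γ₁ ∪ Γ₂) →
      TypingN (n + 1) (Γ₁ ∪ Γ₂) (.app M N) B
  | succ {n : ℕ} {Γ : Ctx} {M : Tm} {A : Ty} :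
      TypingN n Γ M A → TypingN (n + 1) Γ M A

lemma TypingN.mono : ∀ {n m : ℕ} {Γ : Ctx} {M : Tm} {A : Ty},
    TypingN n Γ M A → n ≤ m → TypingN m Γ M A := by
  intro n m
  induction m with
  | zero => intro Γ M A h hle; rwa [Nat.le_zero.1 hle] at h
  | succ m ih =>
      intro Γ M A h hle
      rcases Nat.lt_or_ge n (m + 1) with hlt | hge
      · exact .succ (ih h (Nat.lt_succ_iff.1 hlt))
      · rwa [Nat.le_antisymm hle hge] at h

lemma typingN_of_typing : ∀ {Γ : Ctx} {M : Tm} {A : Ty},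
    Typing Γ M A → ∃ n, TypingN n Γ M A := by
  intro Γ M A h
  induction h with
  | var hok hmem => exact ⟨0, .var hok hmem⟩
  | shift _ ih => obtain ⟨n, hn⟩ := ih; exact ⟨n + 1, .shift hn⟩
  | top M hok => exact ⟨0, .top M hok⟩
  | sub _ hsub ih => obtain ⟨n, hn⟩ := ih; exact ⟨n + 1, .sub hn hsub⟩
  | lamI hfree _ ih => obtain ⟨n, hn⟩ := ih; exact ⟨n + 1, .lamI hfree hn⟩
  | appE _ _ hok ih1 ih2 =>
      obtain ⟨n₁, h1⟩ := ih1
      obtain ⟨n₂, h2⟩ := ih2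
      exact ⟨max n₁ n₂ + 1,
        .appE (h1.mono (le_max_left _ _)) (h2.mono (le_max_right _ _)) hok⟩

lemma typing_of_typingN : ∀ {n : ℕ} {Γ : Ctx} {M : Tm} {A : Ty},
    TypingN n Γ M A → Typing Γ M A := by
  intro n Γ M A h
  induction h with
  | var hok hmem => exact .var hok hmem
  | shift _ ih => exact .shift ih
  | top M hok => exact .top M hok
  | sub _ hsub ih => exact .sub ih hsub
  | lamI hfree _ ih => exact .lamI hfree ih
  | appE _ _ hok ih1 ih2 => exact .appE ih1 ih2 hok
  | succ _ ih => exact ih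

lemma TypingN.ctxOK : ∀ {n : ℕ} {Γ : Ctx} {M : Tm} {A : Ty},
    TypingN n Γ M A → CtxOK Γ := by
  intro n Γ M A h
  induction h with
  | var hok _ => exact hok
  | shift _ ih => exact ctxOK_of_boxCtx ih
  | top _ hok => exact hok
  | sub _ _ ih => exact ih
  | lamI _ _ ih => exact ctxOK_mono (Finset.subset_insert _ _) ih
  | appE _ _ hok _ _ => exact hok
  | succ _ ih => exact ih

/-- Equivariance: typing is preserved under injective renaming of individual variables. -/
lemma TypingN.rename {π : ℕ → ℕ} (hπ : Function.Injective π) :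
    ∀ {n : ℕ} {Γ : Ctx} {M : Tm} {A : Ty},
    TypingN n Γ M A → TypingN n (mapCtx π Γ) (renameTm π M) A := by
  intro n Γ M A h
  induction h with
  | var hok hmem =>
      exact .var (ctxOK_mapCtx hπ hok)
        (by simpa [mapCtx] using Finset.mem_image_of_mem (fun p => (π p.1, p.2)) hmem)
  | shift _ ih => exact .shift (by rwa [boxCtx_mapCtx])
  | top M hok => exact .top _ (ctxOK_mapCtx hπ hok)
  | sub _ hsub ih => exact .sub ih hsub
  | @lamI _ _ y C B M hfree _ ih =>
      refine .lamI (x := π y) (fun hf => hfree (freeTm_renameTm hπ hf)) ?_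
      rw [mapCtx_insert] at ih
      rwa [openTm, renameTm_openAux] at ih
  | appE _ _ hok ih1 ih2 =>
      rw [mapCtx_union]
      exact .appE ih1 ih2 (by rw [← mapCtx_union]; exact ctxOK_mapCtx hπ hok)
  | succ _ ih => exact .succ ih

/-- Weakening, preserving the height of the derivation. -/
lemma TypingN.weaken : ∀ {n : ℕ} {Γ : Ctx} {M : Tm} {A : Ty},
    TypingN n Γ M A → ∀ {Γ' : Ctx}, Γ ⊆ Γ' → CtxOK Γ' → TypingN n Γ' M A := by
  intro n Γ M A h
  induction h with
  | var hok hmem => intro Γ' hsub hok'; exact .var hok' (hsub hmem)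
  | shift _ ih =>
      intro Γ' hsub hok'
      exact .shift (ih (Finset.image_subset_image hsub) (ctxOK_boxCtx hok'))
  | top M hok => intro Γ' _ hok'; exact .top M hok'
  | sub _ hsub ih => intro Γ' h1 h2; exact .sub (ih h1 h2) hsub
  | @lamI n Γ0 y C B M hfree hP ih =>
      intro Γ' hsub hok'
      -- choose a fresh variable z
      obtain ⟨z, hz⟩ := Infinite.exists_notMem_finset
        (fvTm M ∪ domC Γ' ∪ domC Γ0 ∪ {y})
      simp only [Finset.mem_union, Finset.mem_singleton, not_or] at hz
      obtain ⟨⟨⟨hzM, hzΓ'⟩, hzΓ0⟩, hzy⟩ := hz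
      have hπinj : Function.Injective (⇑(Equiv.swap y z)) := (Equiv.swap y z).injective
      have hπinv : ∀ w, Equiv.swap y z (Equiv.swap y z w) = w := fun w =>
        Equiv.swap_apply_self _ _ _
      have hokP : CtxOK (insert (y, C) Γ0) := hP.ctxOK
      -- weaken the premise into the swapped target context
      have hsub2 : insert (y, C) Γ0 ⊆ insert (y, C) (mapCtx (⇑(Equiv.swap y z)) Γ') := by
        intro p hp
        rcases Finset.mem_insert.1 hp with rfl | hp
        · exact Finset.mem_insert_self _ _
        · by_cases hpy : p.1 = y
          · have : p = (y, C) := hokP p (Finset.mem_insert_of_mem hp)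
              (y, C) (Finset.mem_insert_self _ _) hpy
            rw [this]; exact Finset.mem_insert_self _ _
          · have hpz : p.1 ≠ z := by
              intro hh; exact hzΓ0 (mem_domC.2 ⟨p, hp, hh⟩)
            refine Finset.mem_insert_of_mem ?_
            have h0 : (Equiv.swap y z p.1, p.2) ∈ mapCtx (⇑(Equiv.swap y z)) Γ' :=
              Finset.mem_image_of_mem _ (hsub hp)
            rwa [Equiv.swap_apply_of_ne_of_ne hpy hpz] at h0
      have hokmap : CtxOK (insert (y, C) (mapCtx (⇑(Equiv.swap y z)) Γ')) := by
        refine ctxOK_insert_fresh ?_ (ctxOK_mapCtx hπinj hok')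
        intro hy
        obtain ⟨p, hp, hp1⟩ := mem_domC.1 hy
        obtain ⟨q, hq, rfl⟩ := Finset.mem_image.1 hp
        have hq1 : q.1 = z := by
          have h0 := congrArg (⇑(Equiv.swap y z)) hp1
          rwa [hπinv, Equiv.swap_apply_left] at h0
        exact hzΓ' (mem_domC.2 ⟨q, hq, hq1⟩)
      have h1 := ih hsub2 hokmap
      have h2 := h1.rename hπinj
      rw [mapCtx_insert] at h2
      rw [Equiv.swap_apply_left, mapCtx_mapCtx hπinv] at h2
      simp only [openTm] at h2
      rw [renameTm_openAux] at h2
      have hfixM : renameTm (⇑(Equiv.swap y z)) M = M := renameTm_fix (fun w hw => by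
        have hwy : w ≠ y := fun hh => hfree (hh ▸ hw)
        have hwz : w ≠ z := fun hh => hzM ((freeTm_iff).1 (hh ▸ hw))
        exact Equiv.swap_apply_of_ne_of_ne hwy hwz)
      rw [hfixM] at h2
      simp only [renameTm, Equiv.swap_apply_left] at h2
      exact .lamI (fun hf => hzM (freeTm_iff.1 hf)) h2
  | appE _ _ hok ih1 ih2 =>
      intro Γ' hsub hok'
      have h1 := ih1 (Finset.union_subset_left hsub) hok'
      have h2 := ih2 (Finset.union_subset_right hsub) hok'
      have := TypingN.appE h1 h2 (by rwa [Finset.union_self])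
      rwa [Finset.union_self] at this
  | succ _ ih => intro Γ' h1 h2; exact .succ (ih h1 h2)

lemma Typing.weaken {Γ Γ' : Ctx} {M : Tm} {A : Ty}
    (h : Typing Γ M A) (hsub : Γ ⊆ Γ') (hok : CtxOK Γ') : Typing Γ' M A := by
  obtain ⟨n, hn⟩ := typingN_of_typing h
  exact typing_of_typingN (hn.weaken hsub hok)

/-- Renaming the fresh variable of a `lamI` premise, preserving the height. -/
lemma TypingN.freshRename {n : ℕ} {y z : ℕ} {C B : Ty} {Γ : Ctx} {M : Tm}
    (hP : TypingN n (insert (y, C) Γ) (openTm M (.fvar y)) B)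
    (hy : ¬ freeTm y M) (hzM : z ∉ fvTm M) (hzΓ : z ∉ domC Γ)
    (hOK : CtxOK (insert (z, C) Γ)) :
    TypingN n (insert (z, C) Γ) (openTm M (.fvar z)) B := by
  by_cases hzy : z = y
  · subst hzy; exact hP
  have hπinj : Function.Injective (⇑(Equiv.swap y z)) := (Equiv.swap y z).injective
  have h1 := hP.rename hπinj
  rw [mapCtx_insert] at h1
  rw [Equiv.swap_apply_left] at h1
  simp only [openTm] at h1
  rw [renameTm_openAux] at h1
  have hfixM : renameTm (⇑(Equiv.swap y z)) M = M := renameTm_fix (fun w hw => by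
    have hwy : w ≠ y := fun hh => hy (hh ▸ hw)
    have hwz : w ≠ z := fun hh => hzM ((freeTm_iff).1 (hh ▸ hw))
    exact Equiv.swap_apply_of_ne_of_ne hwy hwz)
  rw [hfixM] at h1
  simp only [renameTm, Equiv.swap_apply_left] at h1
  refine h1.weaken ?_ hOK
  intro p hp
  rcases Finset.mem_insert.1 hp with rfl | hp
  · exact Finset.mem_insert_self _ _
  · obtain ⟨q, hq, rfl⟩ := Finset.mem_image.1 hp
    by_cases hqy : q.1 = y
    · have hqC : q = (y, C) := hP.ctxOK q (Finset.mem_insert_of_mem hq)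
        (y, C) (Finset.mem_insert_self _ _) hqy
      rw [hqC]
      simp [Equiv.swap_apply_left]
    · have hqz : q.1 ≠ z := fun hh => hzΓ (mem_domC.2 ⟨q, hq, hh⟩)
      simp only [Equiv.swap_apply_of_ne_of_ne hqy hqz]
      exact Finset.mem_insert_of_mem hq

/-- The necessitation rule is admissible. -/
lemma Typing.nec : ∀ {Γ : Ctx} {M : Tm} {A : Ty},
    Typing Γ M A → Typing (boxCtx Γ) M (.box A) := by
  intro Γ M A h
  induction h with
  | var hok hmem =>
      exact .var (ctxOK_boxCtx hok) (Finset.mem_image_of_mem _ hmem)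
  | @shift Γ' M' A' h' ih => exact h'
  | top M hok =>
      exact .sub (.top M (ctxOK_boxCtx hok)) (Sub.approx tyTop assumOK_empty)
  | sub _ hsub ih => exact .sub ih (Sub.boxMono hsub)
  | @lamI Γ' y C B M' hfree _ ih =>
      rw [boxCtx_insert] at ih
      have := Typing.lamI hfree ih
      exact this.sub (Sub.refl assumOK_empty (TyEq.symm (TyEq.kl C B)))
  | @appE Γa Γb M' N' C B hMa hNb hok ih1 ih2 =>
      rw [boxCtx_union]
      have h1 : Typing (boxCtx Γa) M' (.arrow (.box C) (.box B)) :=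
        ih1.sub (Sub.refl assumOK_empty (TyEq.kl C B))
      exact .appE h1 ih2
        (by rw [← boxCtx_union]; exact ctxOK_boxCtx hok)

/-- Opening of bound variables (at any index, by any term) preserves typing and height. -/
lemma TypingN.openAux : ∀ n : ℕ, ∀ {Γ : Ctx} {P : Tm} {B : Ty},
    TypingN n Γ P B → ∀ (u : Tm) (k : ℕ), TypingN n Γ (openTmAux u k P) B := by
  intro n
  induction n using Nat.strong_induction_on with
  | _ n IH =>
  intro Γ P B h u k
  cases h with
  | var hok hmem => exact .var hok hmem
  | shift hP => exact .shift (IH _ (Nat.lt_succ_self _) hP u k)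
  | top M hok => exact .top _ hok
  | sub hP hsub => exact .sub (IH _ (Nat.lt_succ_self _) hP u k) hsub
  | @lamI n' _ y C B' M hfree hP =>
      obtain ⟨z, hz⟩ := Infinite.exists_notMem_finset
        (fvTm M ∪ fvTm u ∪ domC Γ ∪ {y})
      simp only [Finset.mem_union, Finset.mem_singleton, not_or] at hz
      obtain ⟨⟨⟨hzM, hzu⟩, hzΓ⟩, hzy⟩ := hz
      have hOK : CtxOK (insert (z, C) Γ) :=
        ctxOK_insert_fresh hzΓ (ctxOK_mono (Finset.subset_insert _ _) hP.ctxOK)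
      have hP' := hP.freshRename hfree hzM hzΓ hOK
      have h1 := IH _ (Nat.lt_succ_self _) hP' u (k + 1)
      have h2 := IH _ (Nat.lt_succ_self _) h1 (Tm.fvar z) 0
      rw [openTm] at h2
      rw [open_open_eq u M (by omega : (0 : ℕ) ≠ k + 1)] at h2
      have hfree' : ¬ freeTm z (openTmAux u (k + 1) M) :=
        not_freeTm_openAux (fun hf => hzu (freeTm_iff.1 hf)) (k + 1)
          (fun hf => hzM (freeTm_iff.1 hf))
      have := TypingN.lamI hfree' (by rw [openTm]; exact h2)
      simpa [openTmAux] using this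
  | appE h1 h2 hok =>
      have := TypingN.appE (IH _ (Nat.lt_succ_self _) h1 u k)
        (IH _ (Nat.lt_succ_self _) h2 u k) hok
      simpa [openTmAux] using this
  | succ hP => exact .succ (IH _ (Nat.lt_succ_self _) hP u k)

/-- The substitution lemma, by strong induction on the height of the derivation. -/
lemma substN : ∀ n : ℕ, ∀ {Γ : Ctx} {M : Tm} {B : Ty}, TypingN n Γ M B →
    ∀ (x : ℕ) (A : Ty) (Γ₁ Δ : Ctx) (N : Tm), Γ = insert (x, A) Γ₁ →
    Typing Δ N A → CtxOK (Γ₁ ∪ Δ) → Typing (Γ₁ ∪ Δ) (substTm M x N) B := by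
  intro n
  induction n using Nat.strong_induction_on with
  | _ n IH =>
  intro Γ M B h x A Γ₁ Δ N heq hN hok
  cases h with
  | @var _ _ y B hok0 hmem =>
      subst heq
      by_cases hyx : y = x
      · subst hyx
        have hBA : B = A := by
          have := hok0 (y, B) hmem (y, A) (Finset.mem_insert_self _ _) rfl
          exact congrArg Prod.snd this
        subst hBA
        simpa [substTm] using hN.weaken Finset.subset_union_right hok
      · have hmem' : (y, B) ∈ Γ₁ := by
          rcases Finset.mem_insert.1 hmem with hh | hh
          · exact absurd (congrArg Prod.fst hh) hyx
          · exact hh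
        have : Typing (Γ₁ ∪ Δ) (.fvar y) B :=
          .var hok (Finset.mem_union_left _ hmem')
        simpa [substTm, hyx] using this
  | @shift n' _ _ B hP =>
      subst heq
      rw [boxCtx_insert] at hP
      have := IH n' (Nat.lt_succ_self _) hP x (Ty.box A) (boxCtx Γ₁) (boxCtx Δ) N
        rfl hN.nec (by rw [← boxCtx_union]; exact ctxOK_boxCtx hok)
      rw [← boxCtx_union] at this
      exact .shift this
  | top M hok0 => exact .top _ hok
  | @sub n' _ _ A' B hP hsub =>
      exact .sub (IH n' (Nat.lt_succ_self _) hP x A Γ₁ Δ N heq hN hok) hsub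
  | @lamI n' _ y C B M0 hfree hP =>
      subst heq
      obtain ⟨z, hz⟩ := Infinite.exists_notMem_finset
        (fvTm M0 ∪ fvTm N ∪ domC Γ₁ ∪ domC Δ ∪ {x} ∪ {y})
      simp only [Finset.mem_union, Finset.mem_singleton, not_or] at hz
      obtain ⟨⟨⟨⟨⟨hzM, hzN⟩, hzΓ₁⟩, hzΔ⟩, hzx⟩, hzy⟩ := hz
      have hokins : CtxOK (insert (x, A) Γ₁) :=
        ctxOK_mono (Finset.subset_insert _ _) hP.ctxOK
      have hzdom : z ∉ domC (insert (x, A) Γ₁) := by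
        rw [domC_insert]
        simp only [Finset.mem_insert]
        rintro (rfl | hh)
        · exact hzx rfl
        · exact hzΓ₁ hh
      have hOK : CtxOK (insert (z, C) (insert (x, A) Γ₁)) :=
        ctxOK_insert_fresh hzdom hokins
      have hP' := hP.freshRename hfree hzM hzdom hOK
      rw [Finset.insert_comm] at hP'
      have hzdom2 : z ∉ domC (Γ₁ ∪ Δ) := by
        rw [domC_union]
        simp only [Finset.mem_union]
        rintro (hh | hh)
        · exact hzΓ₁ hh
        · exact hzΔ hh
      have hok2 : CtxOK (insert (z, C) Γ₁ ∪ Δ) := by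
        rw [Finset.insert_union]
        exact ctxOK_insert_fresh hzdom2 hok
      have hR := IH n' (Nat.lt_succ_self _) hP' x A (insert (z, C) Γ₁) Δ N rfl hN hok2
      obtain ⟨m, hRm⟩ := typingN_of_typing hR
      have hR2 := hRm.openAux m (Tm.fvar z) 0
      rw [openTm] at hR2
      rw [subst_open_eq hzx N M0 0] at hR2
      rw [Finset.insert_union] at hR2
      have hfree2 : ¬ freeTm z (substTm M0 x N) :=
        not_freeTm_substTm (fun hf => hzN (freeTm_iff.1 hf))
          (fun hf => hzM (freeTm_iff.1 hf))
      have := Typing.lamI hfree2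
        (by rw [openTm]; exact typing_of_typingN hR2)
      simpa [substTm] using this
  | @appE n' Γa Γb Ma Nb A0 B hPa hPb hCtx =>
      have hxmem : (x, A) ∈ Γa ∪ Γb := by rw [heq]; exact Finset.mem_insert_self _ _
      have herase : ∀ (Γc : Ctx), Γc ⊆ Γa ∪ Γb → Γc.erase (x, A) ⊆ Γ₁ := by
        intro Γc hsubc p hp
        have hpmem := hsubc (Finset.mem_of_mem_erase hp)
        rw [heq] at hpmem
        rcases Finset.mem_insert.1 hpmem with rfl | hh
        · exact absurd rfl (Finset.ne_of_mem_erase hp)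
        · exact hh
      have key : ∀ (Γc : Ctx) {Mc : Tm} {Bc : Ty}, Γc ⊆ Γa ∪ Γb →
          TypingN n' Γc Mc Bc → Typing (Γc.erase (x, A) ∪ Δ) (substTm Mc x N) Bc := by
        intro Γc Mc Bc hsubc hTc
        have hokc : CtxOK (insert (x, A) Γc) :=
          ctxOK_mono (Finset.insert_subset hxmem hsubc) hCtx
        have hTc' := hTc.weaken (Finset.subset_insert (x, A) Γc) hokc
        have hokec : CtxOK (Γc.erase (x, A) ∪ Δ) :=
          ctxOK_mono (Finset.union_subset_union_left (herase Γc hsubc)) hok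
        exact IH n' (Nat.lt_succ_self _) hTc' x A (Γc.erase (x, A)) Δ N
          (insert_erase_eq (x, A) Γc).symm hN hokec
      have h1 := key Γa Finset.subset_union_left hPa
      have h2 := key Γb Finset.subset_union_right hPb
      have hsubfin : (Γa.erase (x, A) ∪ Δ) ∪ (Γb.erase (x, A) ∪ Δ) ⊆ Γ₁ ∪ Δ := by
        refine Finset.union_subset ?_ ?_ <;>
          exact Finset.union_subset_union_left (herase _ (by simp [Finset.subset_union_left, Finset.subset_union_right]))
      have happ := Typing.appE h1 h2 (ctxOK_mono hsubfin hok)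
      exact (happ.weaken hsubfin hok : Typing (Γ₁ ∪ Δ) (substTm (Tm.app Ma Nb) x N) B)
  | @succ n' _ _ _ hP =>
      exact IH n' (Nat.lt_succ_self _) hP x A Γ₁ Δ N heq hN hok

end SubstitutionLemma

/-- The **substitution rule** is derivable in λA: if `Γ₁ ∪ Γ₂` is a well-formed context,
`Γ₁ ∪ {x : A} ⊢ M : B` and `Γ₂ ⊢ N : A` are derivable, then so is
`Γ₁ ∪ Γ₂ ⊢ M[N/x] : B`. -/
theorem statement19 (Γ₁ Γ₂ : Ctx) (x : ℕ) (A B : Ty) (M N : Tm)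
    (hΓ₁ : CtxWF Γ₁) (hΓ₂ : CtxWF Γ₂) (hA : WF A) (hB : WF B)
    (hok : CtxOK (Γ₁ ∪ Γ₂))
    (hM : Typing (insert (x, A) Γ₁) M B) (hN : Typing Γ₂ N A) :
    Typing (Γ₁ ∪ Γ₂) (substTm M x N) B := by
  obtain ⟨n, hn⟩ := typingN_of_typing hM
  exact substN n hn x A Γ₁ Γ₂ N rfl hN hok

end LambdaA
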